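/- arXiv:1504.00770 — 2 statements merged into one kernel-verified Lean document; each statement's English description precedes it below -/
import Mathlib

section
/- Let Υ be an n×n complex Hermitian positive semidefinite matrix of rank r, and let A₁ and A₂ be two given n×n complex Hermitian positive semidefinite matrices. Then there exists a rank-one decomposition Υ = Σ_{j=1}^{r} υ_j υ_j^H into vectors υ_1, …, υ_r ∈ ℂⁿ such that υ_j^H A₁ υ_j = Tr(A₁Υ)/r and υ_j^H A₂ υ_j = Tr(A₂Υ)/r for every j = 1, …, r. -/
open Matrix
open scoped ComplexOrder

variable {n : ℕ}

variable {n : ℕ}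

lemma trace_mul_vecMulVec (A : Matrix (Fin n) (Fin n) ℂ) (x : Fin n → ℂ) :
    (A * vecMulVec x (star x)).trace = star x ⬝ᵥ A.mulVec x := by
  simp [trace, mul_apply, vecMulVec_apply, dotProduct, mulVec, Finset.mul_sum, Finset.sum_mul]
  congr 1; ext i; congr 1; ext k; ring

lemma conj_form {A : Matrix (Fin n) (Fin n) ℂ} (hA : A.IsHermitian) (u v : Fin n → ℂ) :
    star v ⬝ᵥ A.mulVec u = starRingEnd ℂ (star u ⬝ᵥ A.mulVec v) := by
  have h : ∀ i k, starRingEnd ℂ (A i k) = A k i := fun i k => by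
    conv_rhs => rw [← hA]
    rw [conjTranspose_apply]; rfl
  simp [dotProduct, mulVec, Finset.mul_sum, map_sum]
  rw [Finset.sum_comm]
  congr 1; ext i; congr 1; ext k
  rw [← h]; ring

lemma psd_form_real {C : Matrix (Fin n) (Fin n) ℂ} (hC : C.PosSemidef) (x : Fin n → ℂ) :
    star x ⬝ᵥ C.mulVec x = (((star x ⬝ᵥ C.mulVec x).re : ℝ) : ℂ) := by
  have h := hC.dotProduct_mulVec_nonneg x
  rw [Complex.le_def] at h
  apply Complex.ext <;> simp [← h.2]

lemma rot_sum (u v : Fin n → ℂ) (γ : ℂ) (c : ℝ)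
    (hc : (c:ℂ)^2 * (1 + γ * starRingEnd ℂ γ) = 1) :
    vecMulVec ((c:ℂ) • (u + γ • v)) (star ((c:ℂ) • (u + γ • v))) +
      vecMulVec ((c:ℂ) • (v - starRingEnd ℂ γ • u)) (star ((c:ℂ) • (v - starRingEnd ℂ γ • u))) =
    vecMulVec u (star u) + vecMulVec v (star v) := by
  funext i j
  simp only [Matrix.add_apply, vecMulVec_apply, Pi.star_apply, Pi.smul_apply, Pi.add_apply,
    Pi.sub_apply, smul_eq_mul, star_mul', Complex.star_def, map_add, map_sub, _root_.map_mul,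
    Complex.conj_ofReal, Complex.conj_conj]
  linear_combination (u i * starRingEnd ℂ (u j) + v i * starRingEnd ℂ (v j)) * hc

lemma rot_form (A : Matrix (Fin n) (Fin n) ℂ) (u v : Fin n → ℂ) (γ : ℂ) (c : ℝ) :
    star ((c:ℂ) • (u + γ • v)) ⬝ᵥ A.mulVec ((c:ℂ) • (u + γ • v)) =
      (c:ℂ)^2 * (star u ⬝ᵥ A.mulVec u + γ * (star u ⬝ᵥ A.mulVec v)
        + starRingEnd ℂ γ * (star v ⬝ᵥ A.mulVec u)
        + γ * starRingEnd ℂ γ * (star v ⬝ᵥ A.mulVec v)) := by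
  simp only [star_smul, star_add, mulVec_smul, mulVec_add, smul_dotProduct, dotProduct_smul,
    dotProduct_add, add_dotProduct, smul_eq_mul, Complex.star_def, Complex.conj_ofReal]
  ring

lemma ivt_g (a b δ e : ℝ) (ha : δ < a) (hb : b < δ) :
    ∃ t : ℝ, 0 ≤ t ∧ a + 2*t*e + t^2*b = δ * (1 + t^2) := by
  set g : ℝ → ℝ := fun t => (a + 2*t*e + t^2*b) / (1 + t^2) with hg
  have hcont : Continuous g := by
    apply Continuous.div (by continuity) (by continuity)
    intro t; positivity
  set T : ℝ := max 1 ((a - δ + 2*|e| + 1)/(δ - b)) with hT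
  have hT1 : (1:ℝ) ≤ T := le_max_left _ _
  have hTd : (δ - b) * T ≥ a - δ + 2*|e| + 1 := by
    have h2 : (a - δ + 2*|e| + 1)/(δ - b) ≤ T := le_max_right _ _
    have hd : 0 < δ - b := by linarith
    calc a - δ + 2*|e| + 1 = ((a - δ + 2*|e| + 1)/(δ - b)) * (δ - b) := by field_simp
    _ ≤ T * (δ - b) := by nlinarith
    _ = (δ - b) * T := mul_comm _ _
  have hgT : g T < δ := by
    rw [hg]
    rw [div_lt_iff₀ (by positivity)]
    have he1 : e ≤ |e| := le_abs_self e
    have he2 : -|e| ≤ e := neg_abs_le e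
    nlinarith [sq_nonneg T, mul_le_mul_of_nonneg_left he1 (by linarith : (0:ℝ) ≤ 2*T)]
  have hg0 : δ < g 0 := by simp [hg]; linarith
  have h0T : (0:ℝ) ≤ T := by linarith
  have := intermediate_value_Icc' h0T hcont.continuousOn
  have hδmem : δ ∈ Set.Icc (g T) (g 0) := ⟨le_of_lt hgT, le_of_lt hg0⟩
  obtain ⟨t, ht, hgt⟩ := this hδmem
  refine ⟨t, ht.1, ?_⟩
  rw [hg] at hgt
  field_simp at hgt
  linarith [hgt]

lemma sum_form (C : Matrix (Fin n) (Fin n) ℂ) {r : ℕ} (υ : Fin r → (Fin n → ℂ)) :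
    (C * ∑ j, vecMulVec (υ j) (star (υ j))).trace = ∑ j, star (υ j) ⬝ᵥ C.mulVec (υ j) := by
  rw [Matrix.mul_sum, Matrix.trace_sum]
  exact Finset.sum_congr rfl fun j _ => trace_mul_vecMulVec C (υ j)

lemma sum_update_update {α N : Type*} [Fintype α] [DecidableEq α] [AddCommGroup N]
    (g : α → N) {i k : α} (hik : i ≠ k) (x y : N) (hxy : x + y = g i + g k) :
    ∑ j, Function.update (Function.update g i x) k y j = ∑ j, g j := by
  have hk : k ∈ (Finset.univ : Finset α) := Finset.mem_univ k
  have hi : i ∈ (Finset.univ : Finset α) \ {k} := by simp [hik]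
  rw [Finset.sum_update_of_mem hk, Finset.sum_update_of_mem hi]
  have h1 : ∑ j ∈ (Finset.univ : Finset α) \ {k}, g j
      = g i + ∑ j ∈ ((Finset.univ : Finset α) \ {k}) \ {i}, g j := by
    rw [Finset.sum_eq_add_sum_sdiff_singleton_of_mem hi]
  have h2 : ∑ j, g j = g k + ∑ j ∈ (Finset.univ : Finset α) \ {k}, g j := by
    rw [Finset.sum_eq_add_sum_sdiff_singleton_of_mem hk]
  rw [h2, h1]
  have : Function.update g i x i = x := Function.update_self i x g
  abel_nf
  linear_combination (norm := abel) hxy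

lemma equalize_aux {A C : Matrix (Fin n) (Fin n) ℂ} (hA : A.PosSemidef) (hC : C.PosSemidef)
    (δA δC : ℝ) {r : ℕ} (m : ℕ) :
    ∀ υ : Fin r → (Fin n → ℂ),
      (∀ j, star (υ j) ⬝ᵥ A.mulVec (υ j) = (δA : ℂ)) →
      (∑ j, star (υ j) ⬝ᵥ C.mulVec (υ j)) = (r : ℂ) * δC →
      (Finset.univ.filter fun j => star (υ j) ⬝ᵥ C.mulVec (υ j) ≠ (δC : ℂ)).card ≤ m →
      ∃ υ' : Fin r → (Fin n → ℂ),
        (∑ j, vecMulVec (υ' j) (star (υ' j))) = (∑ j, vecMulVec (υ j) (star (υ j))) ∧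
        (∀ j, star (υ' j) ⬝ᵥ A.mulVec (υ' j) = (δA : ℂ)) ∧
        (∀ j, star (υ' j) ⬝ᵥ C.mulVec (υ' j) = (δC : ℂ)) := by
  induction m with
  | zero =>
    intro υ h1 h2 h3
    refine ⟨υ, rfl, h1, fun j => ?_⟩
    by_contra hj
    have hfe := Finset.card_eq_zero.mp (Nat.le_zero.mp h3)
    rw [Finset.eq_empty_iff_forall_notMem] at hfe
    exact hfe j (by simp [hj])
  | succ m ih =>
    intro υ h1 h2 h3
    by_cases hall : ∀ j, star (υ j) ⬝ᵥ C.mulVec (υ j) = (δC : ℂ)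
    · exact ⟨υ, rfl, h1, hall⟩
    push_neg at hall
    obtain ⟨j₀, hj₀⟩ := hall
    set a : Fin r → ℝ := fun j => (star (υ j) ⬝ᵥ C.mulVec (υ j)).re with ha
    have hac : ∀ j, star (υ j) ⬝ᵥ C.mulVec (υ j) = ((a j : ℝ) : ℂ) :=
      fun j => psd_form_real hC (υ j)
    have hasum : ∑ j, a j = r * δC := by
      have hcast : ((∑ j, a j : ℝ) : ℂ) = (((r : ℝ) * δC : ℝ) : ℂ) := by
        push_cast
        rw [← h2]
        exact (Finset.sum_congr rfl fun j _ => (hac j).symm)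
      exact_mod_cast hcast
    have hj0' : a j₀ ≠ δC := fun h => hj₀ (by rw [hac j₀, h])
    have hex_i : ∃ i, δC < a i := by
      by_contra h; push_neg at h
      have hlt : ∑ j, a j < ∑ _j : Fin r, δC :=
        Finset.sum_lt_sum (fun j _ => h j) ⟨j₀, Finset.mem_univ _, (h j₀).lt_of_ne hj0'⟩
      rw [Finset.sum_const, Finset.card_univ, Fintype.card_fin, nsmul_eq_mul] at hlt
      linarith
    have hex_k : ∃ k, a k < δC := by
      by_contra h; push_neg at h
      have hlt : ∑ _j : Fin r, δC < ∑ j, a j :=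
        Finset.sum_lt_sum (fun j _ => h j) ⟨j₀, Finset.mem_univ _, ((h j₀).lt_of_ne (Ne.symm hj0'))⟩
      rw [Finset.sum_const, Finset.card_univ, Fintype.card_fin, nsmul_eq_mul] at hlt
      linarith
    obtain ⟨i, hi⟩ := hex_i
    obtain ⟨k, hk⟩ := hex_k
    have hik : i ≠ k := fun h => by rw [h] at hi; linarith
    set u := υ i with hu
    set v := υ k with hv
    have hAu : star u ⬝ᵥ A.mulVec u = (δA : ℂ) := h1 i
    have hAv : star v ⬝ᵥ A.mulVec v = (δA : ℂ) := h1 k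
    have hCu : star u ⬝ᵥ C.mulVec u = ((a i : ℝ) : ℂ) := hac i
    have hCv : star v ⬝ᵥ C.mulVec v = ((a k : ℝ) : ℂ) := hac k
    set cA : ℂ := star u ⬝ᵥ A.mulVec v with hcA
    set cC : ℂ := star u ⬝ᵥ C.mulVec v with hcC
    set ω : ℂ := if cA = 0 then 1
      else Complex.I * (starRingEnd ℂ cA) * ((‖cA‖ : ℝ) : ℂ)⁻¹ with hω
    have hωs : ω * starRingEnd ℂ ω = 1 ∧ ω * cA + starRingEnd ℂ (ω * cA) = 0 := by
      by_cases h : cA = 0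
      · constructor
        · simp [hω, h]
        · simp [h]
      · have habs : ‖cA‖ ≠ 0 := norm_ne_zero_iff.mpr h
        have hn : ((‖cA‖ : ℝ) : ℂ) ≠ 0 := Complex.ofReal_ne_zero.mpr habs
        have hone : starRingEnd ℂ cA * cA = (((‖cA‖)^2 : ℝ) : ℂ) := by
          rw [mul_comm, Complex.mul_conj]
          norm_cast
          exact Complex.normSq_eq_norm_sq cA
        have hz : ω * cA = Complex.I * ((‖cA‖ : ℝ) : ℂ) := by
          rw [hω, if_neg h]
          field_simp
          push_cast at hone ⊢
          linear_combination hone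
        have habsω : ‖ω‖ = 1 := by
          have h2 : ‖ω * cA‖ = ‖Complex.I * ((‖cA‖ : ℝ) : ℂ)‖ := by rw [hz]
          rw [norm_mul, norm_mul, Complex.norm_I, Complex.norm_real, one_mul, Real.norm_eq_abs,
            abs_of_nonneg (norm_nonneg cA)] at h2
          exact mul_right_cancel₀ habs (by rw [h2, one_mul])
        constructor
        · rw [Complex.mul_conj, Complex.normSq_eq_norm_sq, habsω]
          norm_num
        · rw [hz, Complex.add_conj]
          simp
    have hω1 := hωs.1
    have hωA := hωs.2
    set e : ℝ := (ω * cC).re with he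
    obtain ⟨t, ht0, hivt⟩ := ivt_g (a i) (a k) δC e hi hk
    set γ : ℂ := (t : ℂ) * ω with hγ
    have hγγ : γ * starRingEnd ℂ γ = ((t^2 : ℝ) : ℂ) := by
      rw [hγ, _root_.map_mul, Complex.conj_ofReal]
      push_cast
      linear_combination ((t:ℂ))^2 * hω1
    set c : ℝ := (Real.sqrt (1 + t^2))⁻¹ with hcdef
    have hcreal : c^2 * (1 + t^2) = 1 := by
      rw [hcdef, inv_pow, Real.sq_sqrt (by positivity)]
      field_simp
    have hc : (c:ℂ)^2 * (1 + γ * starRingEnd ℂ γ) = 1 := by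
      rw [hγγ]
      have hcc : ((c^2 * (1 + t^2) : ℝ) : ℂ) = ((1:ℝ):ℂ) := by rw [hcreal]
      push_cast at hcc ⊢
      linear_combination hcc
    set u' : Fin n → ℂ := (c:ℂ) • (u + γ • v) with hu'
    set v' : Fin n → ℂ := (c:ℂ) • (v - starRingEnd ℂ γ • u) with hv'
    have hpair := rot_sum u v γ c hc
    set υ' : Fin r → (Fin n → ℂ) := Function.update (Function.update υ i u') k v' with hυ'
    have hυ'i : υ' i = u' := by
      rw [hυ', Function.update_of_ne hik, Function.update_self]
    have hυ'k : υ' k = v' := by rw [hυ', Function.update_self]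
    have hυ'o : ∀ j, j ≠ i → j ≠ k → υ' j = υ j := fun j hji hjk => by
      rw [hυ', Function.update_of_ne hjk, Function.update_of_ne hji]
    have hcomp : ∀ j, vecMulVec (υ' j) (star (υ' j)) =
        Function.update (Function.update (fun j => vecMulVec (υ j) (star (υ j))) i
          (vecMulVec u' (star u'))) k (vecMulVec v' (star v')) j := by
      intro j
      by_cases hjk : j = k
      · subst hjk; rw [hυ'k, Function.update_self]
      by_cases hji : j = i
      · subst hji
        rw [hυ'i, Function.update_of_ne hik, Function.update_self]
      · rw [hυ'o j hji hjk, Function.update_of_ne hjk, Function.update_of_ne hji]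
    have hpair' : vecMulVec u' (star u') + vecMulVec v' (star v')
        = vecMulVec u (star u) + vecMulVec v (star v) := by
      rw [hu', hv']; exact hpair
    have hsum' : (∑ j, vecMulVec (υ' j) (star (υ' j))) = ∑ j, vecMulVec (υ j) (star (υ j)) := by
      rw [Finset.sum_congr rfl fun j _ => hcomp j]
      exact sum_update_update _ hik _ _ hpair'
    have hconjA : star v ⬝ᵥ A.mulVec u = starRingEnd ℂ cA := conj_form hA.1 u v
    have hconjC : star v ⬝ᵥ C.mulVec u = starRingEnd ℂ cC := conj_form hC.1 u v
    have h0A : γ * cA + starRingEnd ℂ γ * starRingEnd ℂ cA = 0 := by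
      have hh : γ * cA + starRingEnd ℂ γ * starRingEnd ℂ cA
          = (t:ℂ) * (ω * cA + starRingEnd ℂ (ω * cA)) := by
        rw [hγ, _root_.map_mul, _root_.map_mul, Complex.conj_ofReal]
        ring
      rw [hh, hωA, mul_zero]
    have hformA_u' : star u' ⬝ᵥ A.mulVec u' = (δA : ℂ) := by
      rw [hu', rot_form, ← hcA, hconjA, hAu, hAv]
      linear_combination (δA:ℂ) * hc + (c:ℂ)^2 * h0A
    have h2e : γ * cC + starRingEnd ℂ γ * starRingEnd ℂ cC = ((2*t*e : ℝ) : ℂ) := by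
      have hz : γ * cC = (t:ℂ) * (ω * cC) := by rw [hγ]; ring
      calc γ * cC + starRingEnd ℂ γ * starRingEnd ℂ cC
          = γ * cC + starRingEnd ℂ (γ * cC) := by rw [← _root_.map_mul]
        _ = ((2 * (γ * cC).re : ℝ) : ℂ) := Complex.add_conj _
        _ = ((2*t*e : ℝ) : ℂ) := by
            rw [hz]
            push_cast [Complex.mul_re, Complex.ofReal_re, Complex.ofReal_im, he]
            ring
    have hformC_u' : star u' ⬝ᵥ C.mulVec u' = (δC : ℂ) := by
      rw [hu', rot_form, ← hcC, hconjC, hCu, hCv]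
      have hivtC : ((a i : ℝ):ℂ) + ((2*t*e:ℝ):ℂ) + ((t^2:ℝ):ℂ) * ((a k:ℝ):ℂ)
          = (δC:ℂ) * (1 + ((t^2:ℝ):ℂ)) := by
        have hcc := congrArg (Complex.ofReal) hivt
        push_cast at hcc ⊢
        linear_combination hcc
      linear_combination (c:ℂ)^2 * h2e + (c:ℂ)^2 * hivtC + (δC:ℂ) * hc
        + ((c:ℂ)^2 * ((a k:ℝ):ℂ) - (c:ℂ)^2 * (δC:ℂ)) * hγγ
    have pairA : star u' ⬝ᵥ A.mulVec u' + star v' ⬝ᵥ A.mulVec v'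
        = star u ⬝ᵥ A.mulVec u + star v ⬝ᵥ A.mulVec v := by
      have hh := congrArg (fun M => (A * M).trace) hpair'
      simp only [Matrix.mul_add, Matrix.trace_add, trace_mul_vecMulVec] at hh
      exact hh
    have hformA_v' : star v' ⬝ᵥ A.mulVec v' = (δA : ℂ) := by
      have hp := pairA
      rw [hformA_u', hAu, hAv] at hp
      linear_combination hp
    have hformA' : ∀ j, star (υ' j) ⬝ᵥ A.mulVec (υ' j) = (δA : ℂ) := by
      intro j
      by_cases hjk : j = k
      · subst hjk; rw [hυ'k]; exact hformA_v'
      by_cases hji : j = i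
      · subst hji; rw [hυ'i]; exact hformA_u'
      · rw [hυ'o j hji hjk]; exact h1 j
    have hsumC' : (∑ j, star (υ' j) ⬝ᵥ C.mulVec (υ' j)) = (r : ℂ) * δC := by
      rw [← sum_form, hsum', sum_form]
      exact h2
    have hmemi : i ∈ Finset.univ.filter fun j => star (υ j) ⬝ᵥ C.mulVec (υ j) ≠ (δC : ℂ) := by
      simp only [Finset.mem_filter, Finset.mem_univ, true_and]
      rw [hCu]
      exact_mod_cast ne_of_gt hi
    have hsubset : (Finset.univ.filter fun j => star (υ' j) ⬝ᵥ C.mulVec (υ' j) ≠ (δC : ℂ))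
        ⊆ (Finset.univ.filter fun j => star (υ j) ⬝ᵥ C.mulVec (υ j) ≠ (δC : ℂ)).erase i := by
      intro j hj
      simp only [Finset.mem_filter, Finset.mem_univ, true_and] at hj
      rw [Finset.mem_erase]
      by_cases hjk : j = k
      · subst hjk
        refine ⟨Ne.symm hik, ?_⟩
        simp only [Finset.mem_filter, Finset.mem_univ, true_and]
        rw [hCv]
        exact_mod_cast ne_of_lt hk
      by_cases hji : j = i
      · exfalso
        subst hji
        rw [hυ'i] at hj
        exact hj hformC_u'
      · refine ⟨hji, ?_⟩
        simp only [Finset.mem_filter, Finset.mem_univ, true_and]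
        rw [hυ'o j hji hjk] at hj
        exact hj
    have hcard' :
        (Finset.univ.filter fun j => star (υ' j) ⬝ᵥ C.mulVec (υ' j) ≠ (δC : ℂ)).card ≤ m := by
      have h4 := Finset.card_le_card hsubset
      rw [Finset.card_erase_of_mem hmemi] at h4
      omega
    obtain ⟨υ'', hs'', hA'', hC''⟩ := ih υ' hformA' hsumC' hcard'
    exact ⟨υ'', hs''.trans hsum', hA'', hC''⟩

lemma initial_decomp {Υ : Matrix (Fin n) (Fin n) ℂ} (hΥ : Υ.PosSemidef)
    {r : ℕ} (hr : Υ.rank = r) :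
    ∃ υ : Fin r → (Fin n → ℂ), Υ = ∑ j, vecMulVec (υ j) (star (υ j)) := by
  have hH := hΥ.1
  set w : Fin n → (Fin n → ℂ) := fun i j =>
    ((Real.sqrt (hH.eigenvalues i) : ℝ) : ℂ) *
      (hH.eigenvectorUnitary : Matrix (Fin n) (Fin n) ℂ) j i with hw
  have hdecomp : Υ = ∑ i : Fin n, vecMulVec (w i) (star (w i)) := by
    conv_lhs => rw [hH.spectral_theorem, Unitary.conjStarAlgAut_apply]
    ext j k
    simp only [Matrix.sum_apply, vecMulVec_apply, Pi.star_apply, mul_apply,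
      Matrix.diagonal_apply, Function.comp_apply, hw,
      Complex.star_def, _root_.map_mul, Complex.conj_ofReal, mul_ite, ite_mul,
      mul_zero, zero_mul, Matrix.star_apply, Finset.sum_ite_eq, Finset.sum_ite_eq', Finset.mem_univ, if_true]
    refine Finset.sum_congr rfl fun i _ => ?_
    have hnn : 0 ≤ hH.eigenvalues i := hΥ.eigenvalues_nonneg i
    have hs : ((Real.sqrt (hH.eigenvalues i) : ℝ) : ℂ)
        * ((Real.sqrt (hH.eigenvalues i) : ℝ) : ℂ)
        = (RCLike.ofReal (hH.eigenvalues i) : ℂ) := by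
      rw [← Complex.ofReal_mul, Real.mul_self_sqrt hnn]
      rfl
    rw [← hs]
    ring
  have hcard : Fintype.card {i // hH.eigenvalues i ≠ 0} = r := by
    rw [← hH.rank_eq_card_non_zero_eigs, hr]
  set eqv : Fin r ≃ {i // hH.eigenvalues i ≠ 0} := (Fintype.equivFinOfCardEq hcard).symm with heqv
  refine ⟨fun j => w ((eqv j) : Fin n), hdecomp.trans ?_⟩
  have h1 : ∑ i : Fin n, vecMulVec (w i) (star (w i))
      = ∑ i ∈ Finset.univ.filter (fun i => hH.eigenvalues i ≠ 0),
          vecMulVec (w i) (star (w i)) := by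
    symm
    apply Finset.sum_filter_of_ne
    intro i _ hne
    by_contra h0
    apply hne
    have hwz : w i = 0 := by
      funext j
      simp [hw, h0]
    rw [hwz]
    ext j k
    simp [vecMulVec_apply]
  have h2 : ∑ i ∈ Finset.univ.filter (fun i => hH.eigenvalues i ≠ 0),
        vecMulVec (w i) (star (w i))
      = ∑ x : {i // hH.eigenvalues i ≠ 0}, vecMulVec (w x) (star (w x)) := by
    apply Finset.sum_subtype
    intro x
    simp
  rw [h1, h2, ← Equiv.sum_comp eqv (fun x : {i // hH.eigenvalues i ≠ 0} =>
    vecMulVec (w x) (star (w x)))]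


/-- Huang–Zhang rank-one matrix decomposition: a PSD matrix `Υ` of rank `r` admits a
decomposition `Υ = ∑ υ_j υ_jᴴ` whose rank-one terms all share equally the values of the
two quadratic (trace) functionals given by PSD matrices `A₁`, `A₂`. -/
theorem rank_one_decomposition {n : ℕ} (Υ A₁ A₂ : Matrix (Fin n) (Fin n) ℂ)
    (hΥ : Υ.PosSemidef) (hA₁ : A₁.PosSemidef) (hA₂ : A₂.PosSemidef)
    (r : ℕ) (hr : Υ.rank = r) :
    ∃ υ : Fin r → (Fin n → ℂ),
      Υ = ∑ j : Fin r, vecMulVec (υ j) (star (υ j)) ∧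
      ∀ j : Fin r,
        star (υ j) ⬝ᵥ A₁.mulVec (υ j) = (A₁ * Υ).trace / (r : ℂ) ∧
        star (υ j) ⬝ᵥ A₂.mulVec (υ j) = (A₂ * Υ).trace / (r : ℂ) := by
  obtain ⟨υ₀, hdec⟩ := initial_decomp hΥ hr
  rcases Nat.eq_zero_or_pos r with hr0 | hrpos
  · subst hr0
    exact ⟨υ₀, hdec, fun j => j.elim0⟩
  have hrC : ((r : ℂ)) ≠ 0 := Nat.cast_ne_zero.mpr (Nat.pos_iff_ne_zero.mp hrpos)
  have hrR : ((r : ℝ)) ≠ 0 := Nat.cast_ne_zero.mpr (Nat.pos_iff_ne_zero.mp hrpos)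
  set δ₁ : ℝ := (∑ j, (star (υ₀ j) ⬝ᵥ A₁.mulVec (υ₀ j)).re) / r with hδ₁
  set δ₂ : ℝ := (∑ j, (star (υ₀ j) ⬝ᵥ A₂.mulVec (υ₀ j)).re) / r with hδ₂
  have hsum1 : (∑ j, star (υ₀ j) ⬝ᵥ A₁.mulVec (υ₀ j)) = (r : ℂ) * δ₁ := by
    rw [Finset.sum_congr rfl fun j _ => psd_form_real hA₁ (υ₀ j)]
    rw [hδ₁]
    push_cast
    rw [mul_div_cancel₀ _ (by exact_mod_cast hrC)]
  have hsum2 : (∑ j, star (υ₀ j) ⬝ᵥ A₂.mulVec (υ₀ j)) = (r : ℂ) * δ₂ := by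
    rw [Finset.sum_congr rfl fun j _ => psd_form_real hA₂ (υ₀ j)]
    rw [hδ₂]
    push_cast
    rw [mul_div_cancel₀ _ (by exact_mod_cast hrC)]
  have hzero : (0 : Matrix (Fin n) (Fin n) ℂ).PosSemidef := Matrix.PosSemidef.zero
  obtain ⟨υ₁, hs₁, _, heq₁⟩ := equalize_aux hzero hA₁ 0 δ₁ r υ₀
    (fun j => by simp) hsum1 ((Finset.card_filter_le _ _).trans (by simp))
  have hsum2x : (∑ j, star (υ₁ j) ⬝ᵥ A₂.mulVec (υ₁ j)) = (r : ℂ) * δ₂ := by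
    rw [← sum_form, hs₁, sum_form]
    exact hsum2
  obtain ⟨υ₂, hs₂, heq₁', heq₂'⟩ := equalize_aux hA₁ hA₂ δ₁ δ₂ r υ₁
    heq₁ hsum2x ((Finset.card_filter_le _ _).trans (by simp))
  have hdec₂ : Υ = ∑ j, vecMulVec (υ₂ j) (star (υ₂ j)) := by
    rw [hdec, ← hs₁, ← hs₂]
  have htr₁ : (A₁ * Υ).trace = (r : ℂ) * δ₁ := by
    rw [hdec, sum_form]
    exact hsum1
  have htr₂ : (A₂ * Υ).trace = (r : ℂ) * δ₂ := by
    rw [hdec, sum_form]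
    exact hsum2
  refine ⟨υ₂, hdec₂, fun j => ⟨?_, ?_⟩⟩
  · rw [heq₁' j, htr₁, mul_div_cancel_left₀ _ hrC]
  · rw [heq₂' j, htr₂, mul_div_cancel_left₀ _ hrC]
end

section
/- Let X, A₁ and A₂ be n×n complex Hermitian positive semidefinite matrices with X ≠ 0. Then there exists a vector z ∈ ℂⁿ such that z^H A₁ z = Tr(A₁X) and z^H A₂ z = Tr(A₂X). In particular, the rank-one matrix zz^H attains the same values as X under the two linear (trace) constraints Tr(A₁·) and Tr(A₂·). -/
open Matrix
open scoped ComplexOrder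

namespace TwoTrace
variable {n : ℕ}

noncomputable def q (A : Matrix (Fin n) (Fin n) ℂ) (z : Fin n → ℂ) : ℂ :=
  star z ⬝ᵥ A.mulVec z

lemma q_re {A : Matrix (Fin n) (Fin n) ℂ} (hA : A.PosSemidef) (z : Fin n → ℂ) :
    q A z = ((q A z).re : ℂ) ∧ 0 ≤ (q A z).re := by
  have h := hA.dotProduct_mulVec_nonneg z
  rw [Complex.le_def] at h
  refine ⟨(Complex.ext ?_ ?_).symm, by simpa [q] using h.1⟩
  · simp
  · simpa [q] using h.2

lemma q_rot (A : Matrix (Fin n) (Fin n) ℂ) (x y : Fin n → ℂ) (c s : ℝ) (h : c^2 + s^2 = 1) :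
    q A ((c:ℂ) • x + (s:ℂ) • y) + q A ((s:ℂ) • x - (c:ℂ) • y) = q A x + q A y := by
  have hc : ((c:ℂ))^2 + ((s:ℂ))^2 = 1 := by exact_mod_cast congrArg (fun r : ℝ => (r:ℂ)) h
  unfold q
  simp only [mulVec_add, mulVec_sub, mulVec_smul, dotProduct_add, dotProduct_sub,
    dotProduct_smul, add_dotProduct, sub_dotProduct, smul_dotProduct, star_add, star_sub,
    star_smul, smul_eq_mul, Complex.star_def, Complex.conj_ofReal]
  linear_combination (star x ⬝ᵥ A.mulVec x + star y ⬝ᵥ A.mulVec y) * hc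

lemma q_smul (A : Matrix (Fin n) (Fin n) ℂ) (r : ℝ) (z : Fin n → ℂ) :
    q A ((r:ℂ) • z) = ((r^2 : ℝ) : ℂ) * q A z := by
  unfold q
  simp only [mulVec_smul, dotProduct_smul, smul_dotProduct, star_smul, smul_eq_mul,
    Complex.star_def, Complex.conj_ofReal]
  push_cast
  ring

lemma q_cont (A : Matrix (Fin n) (Fin n) ℂ) (x y : Fin n → ℂ) :
    Continuous fun t : ℝ => (q A ((Real.cos t : ℂ) • x + (Real.sin t : ℂ) • y)).re := by
  unfold q
  simp only [Matrix.mulVec, dotProduct, Pi.add_apply, Pi.smul_apply, smul_eq_mul,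
    Pi.star_apply, star_add, star_mul', Complex.star_def, Complex.conj_ofReal]
  fun_prop

lemma exists_add {A₁ A₂ : Matrix (Fin n) (Fin n) ℂ} (hA₁ : A₁.PosSemidef) (hA₂ : A₂.PosSemidef)
    (x y : Fin n → ℂ) : ∃ z, q A₁ z = q A₁ x + q A₁ y ∧ q A₂ z = q A₂ x + q A₂ y := by
  obtain ⟨hx1, ha1⟩ := q_re hA₁ x
  obtain ⟨hx2, ha2⟩ := q_re hA₂ x
  obtain ⟨hy1, hb1⟩ := q_re hA₁ y
  obtain ⟨hy2, hb2⟩ := q_re hA₂ y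
  set a1 := (q A₁ x).re; set a2 := (q A₂ x).re
  set b1 := (q A₁ y).re; set b2 := (q A₂ y).re
  set f : ℝ → (Fin n → ℂ) := fun t => (Real.cos t : ℂ) • x + (Real.sin t : ℂ) • y with hf
  set F : ℝ → ℝ := fun t => (a2+b2) * (q A₁ (f t)).re - (a1+b1) * (q A₂ (f t)).re with hF
  have hf0 : f 0 = x := by simp [hf]
  have hfp : f (Real.pi/2) = y := by simp [hf]
  have hF0 : F 0 = a1*b2 - a2*b1 := by simp only [hF, hf0]; ring
  have hFp : F (Real.pi/2) = -(a1*b2 - a2*b1) := by simp only [hF, hfp]; ring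
  have hFc : Continuous F := by
    exact ((continuous_const.mul (q_cont A₁ x y)).sub (continuous_const.mul (q_cont A₂ x y)))
  obtain ⟨t, _, hFt⟩ : ∃ t ∈ Set.uIcc (0:ℝ) (Real.pi/2), F t = 0 := by
    have hsub := intermediate_value_uIcc (f := F) (a := 0) (b := Real.pi/2) hFc.continuousOn
    have h0 : (0:ℝ) ∈ Set.uIcc (F 0) (F (Real.pi/2)) := by
      rw [hF0, hFp, Set.mem_uIcc]
      rcases le_or_gt 0 (a1*b2 - a2*b1) with h | h
      · right; constructor <;> linarith
      · left; constructor <;> linarith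
    obtain ⟨t, ht, hft⟩ := hsub h0
    exact ⟨t, ht, hft⟩
  obtain ⟨hw1, hu1⟩ := q_re hA₁ (f t)
  obtain ⟨hw2, hu2⟩ := q_re hA₂ (f t)
  set u1 := (q A₁ (f t)).re; set u2 := (q A₂ (f t)).re
  have key : (a2+b2) * u1 = (a1+b1) * u2 := by
    have := hFt; simp only [hF] at this; linarith
  by_cases hu : u1 = 0 ∧ u2 = 0
  · -- degenerate: use the orthogonal rotation vector
    refine ⟨(Real.sin t : ℂ) • x - (Real.cos t : ℂ) • y, ?_, ?_⟩
    · have h1 := q_rot A₁ x y (Real.cos t) (Real.sin t) (Real.cos_sq_add_sin_sq t)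
      have hz : q A₁ (f t) = 0 := by rw [hw1, hu.1]; simp
      simp only [hf] at hz
      linear_combination h1 - hz
    · have h2 := q_rot A₂ x y (Real.cos t) (Real.sin t) (Real.cos_sq_add_sin_sq t)
      have hz : q A₂ (f t) = 0 := by rw [hw2, hu.2]; simp
      simp only [hf] at hz
      linear_combination h2 - hz
  · by_cases hp : a1 + b1 = 0 ∧ a2 + b2 = 0
    · -- target is zero: contradiction-free, give z = 0, but also u must... just use 0
      refine ⟨0, ?_, ?_⟩
      · rw [hx1, hy1, q]; simp
        have : a1 = 0 ∧ b1 = 0 := ⟨by linarith [hp.1], by linarith [hp.1]⟩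
        rw [this.1, this.2]; simp
      · rw [hx2, hy2, q]; simp
        have : a2 = 0 ∧ b2 = 0 := ⟨by linarith [hp.2], by linarith [hp.2]⟩
        rw [this.1, this.2]; simp
    · -- scaling case
      have hp' : 0 < a1 + b1 ∨ 0 < a2 + b2 := by
        rcases lt_or_eq_of_le (by linarith : (0:ℝ) ≤ a1 + b1) with h | h
        · exact Or.inl h
        · rcases lt_or_eq_of_le (by linarith : (0:ℝ) ≤ a2 + b2) with h' | h'
          · exact Or.inr h'
          · exact absurd ⟨h.symm, h'.symm⟩ hp
      rcases hp' with h | h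
      · have hu1pos : 0 < u1 := by
          rcases lt_or_eq_of_le hu1 with h' | h'
          · exact h'
          · exfalso
            have : u2 = 0 := by
              have := key; rw [← h'] at this; simp at this
              rcases this with h'' | h''
              · nlinarith
              · linarith
            exact hu ⟨h'.symm, this⟩
        refine ⟨(Real.sqrt ((a1+b1)/u1) : ℂ) • f t, ?_, ?_⟩
        · rw [q_smul, Real.sq_sqrt (by positivity), hw1, hx1, hy1]
          exact_mod_cast congrArg Complex.ofReal (div_mul_cancel₀ (a1+b1) (ne_of_gt hu1pos))
        · rw [q_smul, Real.sq_sqrt (by positivity), hw2, hx2, hy2]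
          have : (a1+b1)/u1 * u2 = a2 + b2 := by
            field_simp
            linarith [key]
          exact_mod_cast congrArg Complex.ofReal this
      · have hu2pos : 0 < u2 := by
          rcases lt_or_eq_of_le hu2 with h' | h'
          · exact h'
          · exfalso
            have : u1 = 0 := by
              have := key; rw [← h'] at this; simp at this
              rcases this with h'' | h''
              · linarith
              · nlinarith
            exact hu ⟨this, h'.symm⟩
        refine ⟨(Real.sqrt ((a2+b2)/u2) : ℂ) • f t, ?_, ?_⟩
        · rw [q_smul, Real.sq_sqrt (by positivity), hw1, hx1, hy1]
          have : (a2+b2)/u2 * u1 = a1 + b1 := by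
            field_simp
            linarith [key]
          exact_mod_cast congrArg Complex.ofReal this
        · rw [q_smul, Real.sq_sqrt (by positivity), hw2, hx2, hy2]
          exact_mod_cast congrArg Complex.ofReal (div_mul_cancel₀ (a2+b2) (ne_of_gt hu2pos))

lemma trace_eq (A B : Matrix (Fin n) (Fin n) ℂ) :
    (A * (Bᴴ * B)).trace = ∑ i, q A (star (B i)) := by
  rw [← Matrix.mul_assoc, Matrix.trace_mul_comm]
  simp only [Matrix.trace, Matrix.diag, Matrix.mul_apply, q, Matrix.mulVec, dotProduct,
    Matrix.conjTranspose_apply, Pi.star_apply, star_star, Finset.mul_sum, Finset.sum_mul]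

end TwoTrace

open TwoTrace in
/-- For a nonzero PSD matrix `X` and PSD matrices `A₁`, `A₂`, there is a single vector `z`
whose rank-one matrix `z zᴴ` matches `X` on the two trace functionals `Tr(A₁·)`, `Tr(A₂·)`. -/
theorem exists_rank_one_matching_two_traces {n : ℕ}
    (X A₁ A₂ : Matrix (Fin n) (Fin n) ℂ)
    (hX : X.PosSemidef) (hA₁ : A₁.PosSemidef) (hA₂ : A₂.PosSemidef) (hX0 : X ≠ 0) :
    ∃ z : Fin n → ℂ,
      star z ⬝ᵥ A₁.mulVec z = (A₁ * X).trace ∧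
      star z ⬝ᵥ A₂.mulVec z = (A₂ * X).trace := by
  obtain ⟨B, rfl⟩ : ∃ B : Matrix (Fin n) (Fin n) ℂ, X = Bᴴ * B := by
    classical
    open scoped MatrixOrder in
    obtain ⟨Y, hY, -, rfl⟩ := CFC.exists_sqrt_of_isSelfAdjoint_of_quasispectrumRestricts
      hX.isHermitian (QuasispectrumRestricts.nnreal_of_nonneg hX.nonneg)
    exact ⟨Y, by rw [← Matrix.star_eq_conjTranspose, hY.star_eq]⟩
  have key : ∀ s : Finset (Fin n), ∃ z,
      q A₁ z = ∑ i ∈ s, q A₁ (star (B i)) ∧ q A₂ z = ∑ i ∈ s, q A₂ (star (B i)) := by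
    intro s
    induction s using Finset.induction_on with
    | empty => exact ⟨0, by simp [q], by simp [q]⟩
    | insert _ _ hi ih =>
        obtain ⟨z, hz1, hz2⟩ := ih
        obtain ⟨w, hw1, hw2⟩ := exists_add hA₁ hA₂ (star (B _)) z
        refine ⟨w, ?_, ?_⟩
        · rw [Finset.sum_insert hi, hw1, hz1]
        · rw [Finset.sum_insert hi, hw2, hz2]
  obtain ⟨z, hz1, hz2⟩ := key Finset.univ
  exact ⟨z, by rw [show star z ⬝ᵥ A₁.mulVec z = q A₁ z from rfl, hz1, trace_eq],
            by rw [show star z ⬝ᵥ A₂.mulVec z = q A₂ z from rfl, hz2, trace_eq]⟩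
end
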